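/- Let W be a word over the alphabet {K, S, S_x, S_y} defining a caterpillar clique-star labelled tree P_W with extremities the leaves x and y, and let G_W be its accessibility graph. Then xy is an edge of G_W if and only if the word W contains no occurrence of the letter S. -/

import Mathlib

open SimpleGraph

variable {V : Type}

/-- A vertex of a tree is a leaf if it has exactly one neighbour. -/
def IsLeaf (T : SimpleGraph V) (v : V) : Prop := ∃! w, T.Adj v w

/-- Admissibility of a walk in a graph-labelled tree: at every internal vertex of the
walk, the marker vertices corresponding to the two consecutive tree-edges are adjacent
in the label graph. -/
inductive Admissible (T : SimpleGraph V) (F : ∀ v : V, SimpleGraph (T.neighborSet v)) :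
    ∀ {a b : V}, T.Walk a b → Prop
  | nil {a : V} : Admissible T F (SimpleGraph.Walk.nil : T.Walk a a)
  | single {a b : V} (h : T.Adj a b) :
      Admissible T F (SimpleGraph.Walk.cons h SimpleGraph.Walk.nil)
  | cons {a v b c : V} (h1 : T.Adj a v) (h2 : T.Adj v b) (p : T.Walk b c)
      (hadj : (F v).Adj ⟨a, h1.symm⟩ ⟨b, h2⟩)
      (hp : Admissible T F (SimpleGraph.Walk.cons h2 p)) :
      Admissible T F (SimpleGraph.Walk.cons h1 (SimpleGraph.Walk.cons h2 p))

/-- `b` is accessible from `a`: the (unique) path joining them is admissible. -/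
def Accessible (T : SimpleGraph V) (F : ∀ v : V, SimpleGraph (T.neighborSet v))
    (a b : V) : Prop :=
  ∃ p : T.Walk a b, p.IsPath ∧ Admissible T F p

/-- The accessibility graph of a graph-labelled tree: vertices are the leaves of the
tree, two leaves being adjacent iff one is accessible from the other. -/
def accGraph (T : SimpleGraph V) (F : ∀ v : V, SimpleGraph (T.neighborSet v)) :
    SimpleGraph {v : V // IsLeaf T v} :=
  SimpleGraph.fromRel (fun x y => Accessible T F ↑x ↑y)

/-- The alphabet of the words describing paths in clique-star trees. -/
inductive Letter : Type
  | K | S | Sx | Sy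
deriving DecidableEq

/-- Vertices of the caterpillar `P_W` for a word of length `r`: the internal nodes
`u_1, …, u_r` (`Sum.inl i`), the hanging leaves `z_1, …, z_r` (`Sum.inr (Sum.inl i)`),
and the two extremities `x = Sum.inr (Sum.inr 0)` (attached to `u_1`) and
`y = Sum.inr (Sum.inr 1)` (attached to `u_r`). -/
abbrev CatV (r : ℕ) := Fin r ⊕ (Fin r ⊕ Fin 2)

/-- Adjacency relation of the caterpillar tree. -/
def catRel (r : ℕ) : CatV r → CatV r → Prop
  | Sum.inl i, Sum.inl j => (j : ℕ) = (i : ℕ) + 1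
  | Sum.inl i, Sum.inr (Sum.inl j) => i = j
  | Sum.inl i, Sum.inr (Sum.inr k) => (k = 0 ∧ (i : ℕ) = 0) ∨ (k = 1 ∧ (i : ℕ) = r - 1)
  | _, _ => False

/-- The caterpillar tree `P_W` (as a graph). -/
def catT (r : ℕ) : SimpleGraph (CatV r) := SimpleGraph.fromRel (catRel r)

/-- The centre of the star labelling node `u_i`, according to the letter `W i`:
the hanging leaf `z_i` for `S`, the path edge towards `x` for `Sx` (the leaf `x`
itself at the first node), the path edge towards `y` for `Sy` (the leaf `y` itself
at the last node).  (Irrelevant for `K`.) -/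
def catCentre {r : ℕ} (W : Fin r → Letter) (i : Fin r) : CatV r :=
  match W i with
  | Letter.K => Sum.inl i
  | Letter.S => Sum.inr (Sum.inl i)
  | Letter.Sx =>
      if h : (i : ℕ) = 0 then Sum.inr (Sum.inr 0)
      else Sum.inl ⟨(i : ℕ) - 1, by have := i.isLt; omega⟩
  | Letter.Sy =>
      if h : (i : ℕ) = r - 1 then Sum.inr (Sum.inr 1)
      else Sum.inl ⟨(i : ℕ) + 1, by have := i.isLt; omega⟩

/-- The labels of the caterpillar: node `u_i` is labelled by a complete graph if
`W i = K`, and by a star with centre `catCentre W i` otherwise.  (Labels of the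
leaves are irrelevant.) -/
def catF {r : ℕ} (W : Fin r → Letter) :
    ∀ v : CatV r, SimpleGraph ((catT r).neighborSet v) :=
  fun v =>
    match v with
    | Sum.inl i =>
        if W i = Letter.K then ⊤
        else SimpleGraph.fromRel (fun a _ => (a : CatV r) = catCentre W i)
    | Sum.inr _ => ⊤

/-!
The only path from `x` to `y` in the caterpillar is its spine `x, u_1, …, u_r, y`: leaving `u_i`
towards the hanging leaf `z_i` leads to a dead end. The spine is admissible iff at every `u_i`
the two spine markers are adjacent in the label, and this fails exactly for a star centred at
the hanging edge, i.e. for the letter `S`.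
-/

namespace Caterpillar

variable {r : ℕ}

def catPrev (i : Fin r) : CatV r :=
  if h : (i : ℕ) = 0 then Sum.inr (Sum.inr 0)
  else Sum.inl ⟨(i : ℕ) - 1, by have := i.isLt; omega⟩

def catNext (i : Fin r) : CatV r :=
  if h : (i : ℕ) = r - 1 then Sum.inr (Sum.inr 1)
  else Sum.inl ⟨(i : ℕ) + 1, by have := i.isLt; omega⟩

lemma catPrev_ne_catNext (i : Fin r) : catPrev i ≠ catNext i := by
  have := i.isLt
  unfold catPrev catNext
  split_ifs <;> simp [Fin.ext_iff]

lemma catPrev_ne_inr_inl (i j : Fin r) : catPrev i ≠ Sum.inr (Sum.inl j) := by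
  unfold catPrev; split_ifs <;> simp

lemma catNext_ne_inr_inl (i j : Fin r) : catNext i ≠ Sum.inr (Sum.inl j) := by
  unfold catNext; split_ifs <;> simp

lemma catNext_ne_x (i : Fin r) : catNext i ≠ Sum.inr (Sum.inr 0) := by
  unfold catNext; split_ifs <;> simp

lemma catPrev_eq_x_iff (i : Fin r) : catPrev i = Sum.inr (Sum.inr 0) ↔ (i : ℕ) = 0 := by
  unfold catPrev; split_ifs <;> simp [*]

lemma catPrev_eq_inl {i j : Fin r} (h : (i : ℕ) = j + 1) : catPrev i = Sum.inl j := by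
  unfold catPrev; rw [dif_neg (by omega)]; simp [h]

lemma catNext_eq_inl {i j : Fin r} (h : (j : ℕ) = i + 1) : catNext i = Sum.inl j := by
  have := j.isLt
  unfold catNext; rw [dif_neg (by omega)]; simp [Fin.ext_iff, h]

lemma catNext_eq_y {i : Fin r} (h : (i : ℕ) = r - 1) : catNext i = Sum.inr (Sum.inr 1) := by
  unfold catNext; rw [dif_pos h]

lemma catT_adj_inl_iff (i : Fin r) (v : CatV r) :
    (catT r).Adj (Sum.inl i) v ↔ v = catPrev i ∨ v = catNext i ∨ v = Sum.inr (Sum.inl i) := by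
  have := i.isLt
  rcases v with j | j | k
  · simp only [catT, fromRel_adj, catRel, catPrev, catNext, ne_eq, Sum.inl.injEq, Fin.ext_iff]
    split_ifs <;> simp [Fin.ext_iff] <;> omega
  · simp only [catT, fromRel_adj, ne_eq, reduceCtorEq, not_false_eq_true, catRel, or_false,
      true_and, catPrev, dite_eq_ite, catNext, eq_comm, Sum.inr.injEq, Sum.inl.injEq]
    split_ifs <;> simp
  · simp only [catT, fromRel_adj, catRel, catPrev, catNext]
    split_ifs <;> fin_cases k <;> simp <;> omega

lemma exists_eq_inl_of_adj_inr {a : Fin r ⊕ Fin 2} {v : CatV r}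
    (h : (catT r).Adj (Sum.inr a) v) : ∃ j, v = Sum.inl j := by
  rcases v with j | _ | _
  · exact ⟨j, rfl⟩
  all_goals simp [catT, catRel] at h

lemma catT_adj_inr_inl {i : Fin r} {v : CatV r} (h : (catT r).Adj (Sum.inr (Sum.inl i)) v) :
    v = Sum.inl i := by
  obtain ⟨j, rfl⟩ := exists_eq_inl_of_adj_inr h
  rcases (catT_adj_inl_iff j _).1 h.symm with h' | h' | h'
  · exact absurd h'.symm (catPrev_ne_inr_inl j i)
  · exact absurd h'.symm (catNext_ne_inr_inl j i)
  · simp_all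

variable {W : Fin r → Letter}

lemma catF_inl_adj_iff {i : Fin r} {a b : (catT r).neighborSet (Sum.inl i)} :
    (catF W (Sum.inl i)).Adj a b ↔
      a ≠ b ∧
        (W i = Letter.K ∨ (a : CatV r) = catCentre W i ∨ (b : CatV r) = catCentre W i) := by
  change (if W i = Letter.K then ⊤ else fromRel _).Adj a b ↔ _
  split_ifs with hK <;> simp [hK]

lemma catF_adj_catPrev_catNext {i : Fin r} (hS : W i ≠ Letter.S)
    {a b : (catT r).neighborSet (Sum.inl i)} (ha : (a : CatV r) = catPrev i)
    (hb : (b : CatV r) = catNext i) : (catF W (Sum.inl i)).Adj a b := by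
  refine catF_inl_adj_iff.2 ⟨fun hab => catPrev_ne_catNext i (ha ▸ hb ▸ hab ▸ rfl), ?_⟩
  rw [ha, hb]
  unfold catCentre catPrev catNext
  rcases hW : W i <;> simp_all

lemma ne_S_of_catF_adj {i : Fin r} {a b : (catT r).neighborSet (Sum.inl i)}
    (ha : (a : CatV r) ≠ Sum.inr (Sum.inl i)) (hb : (b : CatV r) ≠ Sum.inr (Sum.inl i))
    (h : (catF W (Sum.inl i)).Adj a b) : W i ≠ Letter.S := by
  intro hS
  have hc : catCentre W i = Sum.inr (Sum.inl i) := by unfold catCentre; rw [hS]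
  rcases (catF_inl_adj_iff.1 h).2 with hK | hc' | hc' <;> simp_all

lemma eq_catNext_of_isPath {pv w : CatV r} {i : Fin r} (hpv : pv = catPrev i)
    (h₁ : (catT r).Adj pv (Sum.inl i)) (h₂ : (catT r).Adj (Sum.inl i) w)
    (q : (catT r).Walk w (Sum.inr (Sum.inr 1))) (hp : (Walk.cons h₁ (Walk.cons h₂ q)).IsPath) :
    w = catNext i := by
  rcases (catT_adj_inl_iff i w).1 h₂ with rfl | rfl | rfl
  · subst hpv; simp at hp
  · rfl
  · -- the hanging leaf `z_i` is not `y`, and its only neighbour `u_i` was already visited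
    cases q with
    | cons h₃ q =>
      obtain rfl := catT_adj_inr_inl h₃
      simp at hp

lemma ne_S_of_admissible_isPath {pv v w : CatV r} (h : (catT r).Adj pv v)
    (q : (catT r).Walk v w) (hw : w = Sum.inr (Sum.inr 1)) (hp : (Walk.cons h q).IsPath)
    (ha : Admissible (catT r) (catF W) (Walk.cons h q)) {i : Fin r} (hv : v = Sum.inl i)
    (hpv : pv = catPrev i) {j : Fin r} (hij : i ≤ j) : W j ≠ Letter.S := by
  induction q generalizing pv i with
  | nil => simp_all
  | @cons v w' w h' q ih =>
    subst hv hw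
    rcases ha with _ | _ | ⟨_, _, _, hlabel, ha⟩
    have hw' := eq_catNext_of_isPath hpv h h' q hp
    have hWi : W i ≠ Letter.S :=
      ne_S_of_catF_adj (hpv ▸ catPrev_ne_inr_inl i i) (hw' ▸ catNext_ne_inr_inl i i) hlabel
    rcases hij.eq_or_lt with rfl | hij
    · exact hWi
    have hi : (i : ℕ) + 1 < r := by have := j.isLt; omega
    exact ih h' rfl hp.of_cons ha (hw'.trans (catNext_eq_inl (j := ⟨i + 1, hi⟩) rfl))
      (catPrev_eq_inl rfl).symm (Nat.succ_le_of_lt hij)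

-- The support bound keeps `u_i`, and `x`, off the rest of the path.
lemma exists_admissible_isPath (i : Fin r) (hW : ∀ j, i ≤ j → W j ≠ Letter.S) :
    ∃ q : (catT r).Walk (Sum.inl i) (Sum.inr (Sum.inr 1)), q.IsPath ∧
      (∀ v ∈ q.support, v = Sum.inr (Sum.inr 1) ∨ ∃ j, i ≤ j ∧ v = Sum.inl j) ∧
      ∀ pv (h : (catT r).Adj pv (Sum.inl i)), pv = catPrev i →
        Admissible (catT r) (catF W) (Walk.cons h q) := by
  by_cases hi : (i : ℕ) = r - 1
  · have hnext := catNext_eq_y hi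
    have h₂ : (catT r).Adj (Sum.inl i) (Sum.inr (Sum.inr 1)) :=
      (catT_adj_inl_iff i _).2 (Or.inr (Or.inl hnext.symm))
    refine ⟨.cons h₂ .nil, by simp, ?_, fun pv h hpv => ?_⟩
    · simp
    · exact .cons h h₂ .nil
        (catF_adj_catPrev_catNext (hW i le_rfl) (a := ⟨pv, h.symm⟩) hpv hnext.symm)
        (.single h₂)
  · have hi' : (i : ℕ) + 1 < r := by omega
    obtain ⟨q, hq, hsupp, hadm⟩ :=
      exists_admissible_isPath (⟨i + 1, hi'⟩ : Fin r) fun j hj => hW j (by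
        rw [Fin.le_iff_val_le_val] at hj ⊢; exact le_trans (Nat.le_succ _) hj)
    have hnext : catNext i = Sum.inl ⟨i + 1, hi'⟩ := catNext_eq_inl rfl
    have h₂ : (catT r).Adj (Sum.inl i) (Sum.inl ⟨i + 1, hi'⟩) :=
      (catT_adj_inl_iff i _).2 (Or.inr (Or.inl hnext.symm))
    refine ⟨.cons h₂ q, ?_, ?_, fun pv h hpv => ?_⟩
    · refine (Walk.cons_isPath_iff _ _).2 ⟨hq, fun hmem => ?_⟩
      rcases hsupp _ hmem with h | ⟨j, hj, h⟩
      · simp at h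
      · simp [Fin.le_iff_val_le_val, Sum.inl_injective h] at hj
    · simp only [Walk.support_cons, List.mem_cons, forall_eq_or_imp]
      refine ⟨.inr ⟨i, le_rfl, rfl⟩, fun v hv => (hsupp v hv).imp_right ?_⟩
      rintro ⟨j, hj, rfl⟩
      exact ⟨j, le_trans (Nat.le_succ _) hj, rfl⟩
    · exact .cons h h₂ q
        (catF_adj_catPrev_catNext (hW i le_rfl) (a := ⟨pv, h.symm⟩) hpv hnext.symm)
        (hadm _ h₂ (catPrev_eq_inl rfl).symm)
termination_by r - i

end Caterpillar

open Caterpillar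

/-- `xy` is an edge of the accessibility graph `G_W` of the caterpillar
clique-star tree `P_W` iff the word `W` contains no occurrence of the letter `S`. -/
theorem stmt10 (r : ℕ) (hr : 0 < r) (W : Fin r → Letter) :
    Accessible (catT r) (catF W) (Sum.inr (Sum.inr 0)) (Sum.inr (Sum.inr 1)) ↔
      ∀ i : Fin r, W i ≠ Letter.S := by
  constructor
  · rintro ⟨_ | ⟨h, q⟩, hp, ha⟩ i
    obtain ⟨j, rfl⟩ := exists_eq_inl_of_adj_inr h
    have hx : Sum.inr (Sum.inr 0) = catPrev j := by
      rcases (catT_adj_inl_iff j _).1 h.symm with hx | hx | hx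
      · exact hx
      · exact absurd hx.symm (catNext_ne_x j)
      · simp at hx
    have hj : (j : ℕ) = 0 := (catPrev_eq_x_iff j).1 hx.symm
    exact ne_S_of_admissible_isPath h q rfl hp ha rfl hx (by simp [Fin.le_iff_val_le_val, hj])
  · intro hW
    obtain ⟨q, hq, hsupp, hadm⟩ := exists_admissible_isPath (W := W) ⟨0, hr⟩ fun j _ => hW j
    have hx : Sum.inr (Sum.inr 0) = catPrev (⟨0, hr⟩ : Fin r) :=
      ((catPrev_eq_x_iff _).2 rfl).symm
    have h := ((catT_adj_inl_iff _ _).2 (Or.inl hx)).symm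
    refine ⟨.cons h q, (Walk.cons_isPath_iff _ _).2 ⟨hq, fun hmem => ?_⟩, hadm _ h hx⟩
    rcases hsupp _ hmem with h | ⟨_, _, h⟩ <;> simp at h
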